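/- arXiv:math/0204171 — 9 statements merged into one kernel-verified Lean document; each statement's English description precedes it below -/
import Mathlib

section
/- Points c₁,...,c_{n+1} ∈ ℂⁿ are affinely dependent if and only if their Cayley-Menger determinant equals 0. -/
noncomputable def phi (n : ℕ) (x y : Fin n → ℂ) : ℂ := ∑ i, (x i - y i) ^ 2

noncomputable def cayleyMenger (n m : ℕ) (c : Fin m → (Fin n → ℂ)) :
    Matrix (Fin (m + 1)) (Fin (m + 1)) ℂ :=
  Matrix.of fun i j =>
    Fin.cases (Fin.cases (0 : ℂ) (fun _ => 1) j)
      (fun i' => Fin.cases (1 : ℂ) (fun j' => phi n (c i') (c j')) j) i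

namespace CMaux

variable (n : ℕ) (c : Fin (n + 1) → (Fin n → ℂ))

noncomputable def V : Matrix (Fin (n + 1)) (Fin (n + 1)) ℂ :=
  Matrix.of fun i j => Fin.cases (1 : ℂ) (fun j' => c i j') j

noncomputable def U : Matrix (Fin (n + 2)) (Fin (n + 2)) ℂ :=
  Matrix.of fun i j =>
    Fin.cases (Fin.cases (0 : ℂ) (fun j' => Fin.cases (1 : ℂ) (fun _ => 0) j') j)
      (fun i' => Fin.cases (1 : ℂ)
        (fun j' => Fin.cases (∑ k, c i' k ^ 2) (fun k => c i' k) j') j) i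

noncomputable def dvec : Fin (n + 2) → ℂ := Fin.cases 1 (Fin.cases 1 (fun _ => -2))

noncomputable def T : Matrix (Fin (n + 2)) (Fin (n + 2)) ℂ :=
  Matrix.of fun a j => dvec n a * U n c j (Equiv.swap 0 1 a)

lemma cases_one {α : Type*} {m : ℕ} (a : α) (f : Fin (m + 1) → α) :
    (Fin.cases a f (1 : Fin (m + 2)) : α) = f 0 := by
  rw [← Fin.succ_zero_eq_one, Fin.cases_succ]

lemma fin_ssne1 {m : ℕ} (k : Fin m) : (k.succ.succ : Fin (m + 2)) ≠ 1 := by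
  intro h
  rw [← Fin.succ_zero_eq_one] at h
  exact Fin.succ_ne_zero k ((Fin.succ_injective _) h)

lemma swap_ss {m : ℕ} (k : Fin m) :
    Equiv.swap (0 : Fin (m + 2)) 1 k.succ.succ = k.succ.succ :=
  Equiv.swap_apply_of_ne_of_ne (Fin.succ_ne_zero _) (fin_ssne1 k)

lemma dvec_ss (k : Fin n) : dvec n k.succ.succ = -2 := by
  simp [dvec]

lemma phi_expand (x y : Fin n → ℂ) :
    phi n x y = ∑ k, y k ^ 2 + (∑ k, x k ^ 2 + ∑ k, x k * (-2 * y k)) := by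
  unfold phi
  rw [← Finset.sum_add_distrib, ← Finset.sum_add_distrib]
  exact Finset.sum_congr rfl fun k _ => by ring

lemma CM_eq_mul : cayleyMenger n (n + 1) c = U n c * T n c := by
  ext i j
  rw [Matrix.mul_apply, Fin.sum_univ_succ, Fin.sum_univ_succ]
  have h0 : ∀ j : Fin (n + 2), T n c 0 j = U n c j 1 := by
    intro j; simp [T, dvec, cases_one]
  have h1 : ∀ j : Fin (n + 2), T n c (Fin.succ 0) j = U n c j 0 := by
    intro j
    rw [Fin.succ_zero_eq_one]
    have hd : dvec n 1 = 1 := by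
      simp [dvec, cases_one]
    simp [T, hd, Equiv.swap_apply_right]
  have h2 : ∀ (k : Fin n) (j : Fin (n + 2)),
      T n c k.succ.succ j = -2 * U n c j k.succ.succ := by
    intro k j
    simp only [T, Matrix.of_apply, swap_ss, dvec_ss]
  rw [h0, h1]
  simp only [h2]
  induction i using Fin.cases with
  | zero =>
      induction j using Fin.cases with
      | zero => simp [cayleyMenger, U, cases_one]
      | succ j' => simp [cayleyMenger, U, cases_one]
  | succ i' =>
      induction j using Fin.cases with
      | zero => simp [cayleyMenger, U, cases_one]
      | succ j' =>
          simp only [cayleyMenger, U, Matrix.of_apply, Fin.cases_succ, Fin.cases_zero,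
            cases_one, one_mul, mul_one]
          induction j' using Fin.cases with
          | zero => exact phi_expand n (c i') (c 0)
          | succ j'' => exact phi_expand n (c i') (c j''.succ)

lemma prod_dvec : ∏ a, dvec n a = (-2 : ℂ) ^ n := by
  rw [Fin.prod_univ_succ, Fin.prod_univ_succ]
  simp [dvec, cases_one]

lemma det_T : (T n c).det = ((-2 : ℂ) ^ n * (-1)) * (U n c).det := by
  have hT : T n c =
      Matrix.of fun a j => dvec n a * (((U n c).transpose).submatrix (Equiv.swap 0 1) id) a j := by
    ext a j
    simp [T, Matrix.submatrix_apply]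
  rw [hT, Matrix.det_mul_column, Matrix.det_permute, Matrix.det_transpose, prod_dvec,
    Equiv.Perm.sign_swap (by simp : (0 : Fin (n + 2)) ≠ 1)]
  push_cast
  ring

lemma U_row0 (j : Fin (n + 2)) : U n c 0 j = if j = 1 then 1 else 0 := by
  induction j using Fin.cases with
  | zero =>
      simp [U]
  | succ j' =>
      induction j' using Fin.cases with
      | zero => rw [Fin.succ_zero_eq_one]; simp [U, cases_one]
      | succ j'' => simp [U, fin_ssne1 j'']

lemma sub_eq_V : (U n c).submatrix Fin.succ ((1 : Fin (n + 2)).succAbove) = V n c := by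
  ext i j
  induction j using Fin.cases with
  | zero =>
      have h : (1 : Fin (n + 2)).succAbove 0 = 0 := by
        rw [Fin.succAbove_of_castSucc_lt _ _ (by simp [Fin.lt_def])]
        simp
      simp [Matrix.submatrix_apply, h, U, V]
  | succ j' =>
      have h : (1 : Fin (n + 2)).succAbove j'.succ = j'.succ.succ := by
        rw [Fin.succAbove_of_le_castSucc _ _ (by simp [Fin.le_def])]
      simp [Matrix.submatrix_apply, h, U, V]

lemma det_U : (U n c).det = -(V n c).det := by
  rw [Matrix.det_succ_row_zero, Finset.sum_eq_single (1 : Fin (n + 2))]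
  · rw [U_row0, sub_eq_V]
    simp
  · intro j _ hj
    rw [U_row0]
    simp [hj]
  · intro h
    exact absurd (Finset.mem_univ _) h

lemma affdep_iff : ¬ AffineIndependent ℂ c ↔ (V n c).det = 0 := by
  rw [← Matrix.exists_vecMul_eq_zero_iff]
  have key : ∀ (v : Fin (n + 1) → ℂ) (j : Fin (n + 1)),
      Matrix.vecMul v (V n c) j = ∑ i, v i * V n c i j := by
    intro v j
    simp [Matrix.vecMul, dotProduct]
  constructor
  · intro h
    rw [affineIndependent_iff] at h
    push_neg at h
    obtain ⟨s, w, hw0, hwc, e, hes, hwe⟩ := h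
    refine ⟨fun i => if i ∈ s then w i else 0, ?_, ?_⟩
    · intro hv
      apply hwe
      have := congrFun hv e
      simpa [hes] using this
    · funext j
      rw [key]
      induction j using Fin.cases with
      | zero =>
          simp only [V, Matrix.of_apply, Fin.cases_zero, mul_one, ite_mul, zero_mul,
            Pi.zero_apply]
          rw [Finset.sum_ite_mem, Finset.univ_inter]
          exact hw0
      | succ j' =>
          simp only [V, Matrix.of_apply, Fin.cases_succ, ite_mul, zero_mul, Pi.zero_apply]
          rw [Finset.sum_ite_mem, Finset.univ_inter]
          have := congrFun hwc j'
          simpa [Finset.sum_apply] using this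
  · rintro ⟨v, hv, hvV⟩ h
    apply hv
    funext i
    refine affineIndependent_iff.mp h Finset.univ v ?_ ?_ i (Finset.mem_univ i)
    · have := congrFun hvV 0
      rw [key] at this
      simpa [V] using this
    · funext k
      have := congrFun hvV k.succ
      rw [key] at this
      simpa [V, Finset.sum_apply] using this

end CMaux

theorem stmt1 (n : ℕ) (c : Fin (n + 1) → (Fin n → ℂ)) :
    ¬ AffineIndependent ℂ c ↔ Matrix.det (cayleyMenger n (n + 1) c) = 0 := by
  have h1 : (cayleyMenger n (n + 1) c).det
      = (-((-2 : ℂ) ^ n)) * (CMaux.V n c).det ^ 2 := by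
    rw [CMaux.CM_eq_mul, Matrix.det_mul, CMaux.det_T, CMaux.det_U]
    ring
  rw [CMaux.affdep_iff, h1]
  constructor
  · intro h
    rw [h]
    ring
  · intro h
    rcases mul_eq_zero.mp h with h2 | h2
    · exact absurd h2 (by simp)
    · exact pow_eq_zero_iff (by norm_num) |>.mp h2
end

section
/- If d > 0 and points c₁,...,c_{n+1} ∈ ℂⁿ satisfy φₙ(cᵢ,cⱼ) = d² for all 1 ≤ i < j ≤ n+1, then c₁,...,c_{n+1} are affinely independent. -/
theorem stmt3 (n : ℕ) (d : ℝ) (hd : 0 < d) (c : Fin (n + 1) → (Fin n → ℂ))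
    (h : ∀ i j : Fin (n + 1), i < j → phi n (c i) (c j) = (d : ℂ) ^ 2) :
    AffineIndependent ℂ c := by
  have hd2 : (d : ℂ) ^ 2 ≠ 0 := pow_ne_zero 2 (by exact_mod_cast hd.ne')
  have hphi : ∀ i j : Fin (n+1), phi n (c i) (c j) = if i = j then 0 else (d:ℂ)^2 := by
    intro i j
    rcases lt_trichotomy i j with h'|h'|h'
    · simp [h'.ne, h i j h']
    · subst h'; simp [phi]
    · rw [if_neg h'.ne', ← h j i h']
      unfold phi
      exact Finset.sum_congr rfl (fun k _ => by ring)
  set B : (Fin n → ℂ) → (Fin n → ℂ) → ℂ := fun x y => ∑ k, x k * y k with hB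
  have hpol : ∀ i j : Fin (n+1), 2 * B (c i - c 0) (c j - c 0)
      = phi n (c i) (c 0) + phi n (c j) (c 0) - phi n (c i) (c j) := by
    intro i j
    simp only [hB, phi, Finset.mul_sum, ← Finset.sum_add_distrib, ← Finset.sum_sub_distrib]
    exact Finset.sum_congr rfl (fun k _ => by simp only [Pi.sub_apply]; ring)
  have hBval : ∀ i j : Fin (n+1), i ≠ 0 → j ≠ 0 →
      2 * B (c i - c 0) (c j - c 0) = (d:ℂ)^2 + (if i = j then (d:ℂ)^2 else 0) := by
    intro i j hi hj
    rw [hpol, hphi, hphi, hphi, if_neg hi, if_neg hj]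
    by_cases hij : i = j <;> simp [hij] <;> ring
  rw [affineIndependent_iff_linearIndependent_vsub ℂ c 0]
  rw [Fintype.linearIndependent_iff]
  intro g hg
  have hg' : (∑ i : {x : Fin (n+1) // x ≠ 0}, g i • (c ↑i - c 0)) = 0 := by
    simpa [vsub_eq_sub] using hg
  have key : ∀ j : {x : Fin (n+1) // x ≠ 0},
      (d:ℂ)^2 * (g j + ∑ i : {x : Fin (n+1) // x ≠ 0}, g i) = 0 := by
    intro j
    have h0 : B (c ↑j - c 0) (∑ i : {x : Fin (n+1) // x ≠ 0}, g i • (c ↑i - c 0)) = 0 := by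
      rw [hg']; simp [hB]
    have h1 : B (c ↑j - c 0) (∑ i : {x : Fin (n+1) // x ≠ 0}, g i • (c ↑i - c 0))
        = ∑ i : {x : Fin (n+1) // x ≠ 0}, g i * B (c ↑j - c 0) (c ↑i - c 0) := by
      simp only [hB, Finset.sum_apply, Pi.smul_apply, smul_eq_mul, Finset.mul_sum]
      rw [Finset.sum_comm]
      exact Finset.sum_congr rfl (fun i _ => Finset.sum_congr rfl (fun k _ => by ring))
    have h2 : (2:ℂ) * ∑ i : {x : Fin (n+1) // x ≠ 0}, g i * B (c ↑j - c 0) (c ↑i - c 0) = 0 := by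
      rw [← h1, h0, mul_zero]
    rw [Finset.mul_sum] at h2
    have h3 : ∀ i : {x : Fin (n+1) // x ≠ 0},
        2 * (g i * B (c ↑j - c 0) (c ↑i - c 0))
          = g i * ((d:ℂ)^2 + (if (j:Fin (n+1)) = i then (d:ℂ)^2 else 0)) := by
      intro i
      rw [mul_left_comm, hBval _ _ j.2 i.2]
    rw [Finset.sum_congr rfl (fun i _ => h3 i)] at h2
    have h4 : (∑ i : {x : Fin (n+1) // x ≠ 0},
        g i * ((d:ℂ)^2 + (if (j:Fin (n+1)) = i then (d:ℂ)^2 else 0)))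
        = (d:ℂ)^2 * (g j + ∑ i : {x : Fin (n+1) // x ≠ 0}, g i) := by
      simp only [mul_add, mul_ite, mul_zero, Finset.sum_add_distrib]
      have hcond : ∀ i : {x : Fin (n+1) // x ≠ 0},
          (if (↑j : Fin (n+1)) = ↑i then g i * (d:ℂ)^2 else 0)
            = if j = i then g i * (d:ℂ)^2 else 0 := fun i => by
        simp [Subtype.ext_iff]
      rw [Finset.sum_congr rfl (fun i _ => hcond i), Finset.sum_ite_eq]
      simp only [Finset.mem_univ, if_pos]
      rw [Finset.mul_sum, add_comm]
      congr 1
      · ring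
      · exact Finset.sum_congr rfl (fun i _ => by ring)
    rw [h4] at h2
    exact h2
  set S := ∑ i : {x : Fin (n+1) // x ≠ 0}, g i with hS
  have hgj : ∀ j : {x : Fin (n+1) // x ≠ 0}, g j = -S := by
    intro j
    have := key j
    have := mul_eq_zero.mp this
    rcases this with h'|h'
    · exact absurd h' hd2
    · linear_combination h'
  have hcard : Fintype.card {x : Fin (n+1) // x ≠ 0} = n := by
    have h1 := Fintype.card_subtype_compl (fun x : Fin (n+1) => x = 0)
    simp only [Fintype.card_subtype_eq, Fintype.card_fin] at h1
    simpa using h1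
  have hsum : S = (n : ℂ) * (-S) := by
    calc S = ∑ j : {x : Fin (n+1) // x ≠ 0}, g j := hS
    _ = ∑ _j : {x : Fin (n+1) // x ≠ 0}, -S :=
        Finset.sum_congr rfl (fun j _ => hgj j)
    _ = (Fintype.card {x : Fin (n+1) // x ≠ 0} : ℂ) * (-S) := by
        rw [Finset.sum_const, Finset.card_univ, nsmul_eq_mul]
    _ = (n : ℂ) * (-S) := by rw [hcard]
  have hS0 : S = 0 := by
    have hne : ((n : ℂ) + 1) ≠ 0 := Nat.cast_add_one_ne_zero n
    have : ((n : ℂ) + 1) * S = 0 := by linear_combination hsum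
    exact (mul_eq_zero.mp this).resolve_left hne
  exact fun j => by rw [hgj j, hS0, neg_zero]
end

section
/- If d > 0 and points c₁,...,cₙ, c ∈ ℂⁿ satisfy φₙ(cᵢ,cⱼ) = (2+2/n)·d² for all 1 ≤ i < j ≤ n and φₙ(cᵢ,c) = d² for all 1 ≤ i ≤ n, then c₁,...,cₙ,c are affinely independent. -/
/-!
The vectors `vᵢ = cᵢ - c` have, for the complex bilinear (not Hermitian) dot product, the Gram
matrix `d² ((1 + 1/n) I - (1/n) J)`: the diagonal is `φₙ(cᵢ, c) = d²`, and polarization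
`φₙ(cᵢ, cⱼ) = 2d² - 2 vᵢ ⬝ vⱼ` gives the off-diagonal `-d²/n`. Its eigenvalues `d² (n + 1)/n` and
`d²/n` do not vanish, so the `vᵢ` are linearly independent.
-/

open Matrix

/-- The Gram matrix `(a - b) • 1 + b • J` (`J` all ones) has eigenvalues `a - b` and
`a - b + card ι * b`. -/
theorem linearIndependent_of_bilin_apply_eq {K V ι : Type*} [Field K] [AddCommGroup V]
    [Module K V] [Fintype ι] (B : V →ₗ[K] V →ₗ[K] K) (v : ι → V) {a b : K}
    (hdiag : ∀ i, B (v i) (v i) = a) (hoff : ∀ i j, i ≠ j → B (v i) (v j) = b)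
    (hab : a - b ≠ 0) (hcard : a - b + Fintype.card ι * b ≠ 0) : LinearIndependent K v := by
  classical
  rw [Fintype.linearIndependent_iff]
  intro g hg
  set S := ∑ i, g i
  have hrow : ∀ j, (a - b) * g j + b * S = 0 := by
    intro j
    have hB : ∀ i, g i * B (v i) (v j) = b * g i + if i = j then (a - b) * g j else 0 := by
      intro i
      by_cases hij : i = j
      · subst hij; rw [hdiag]; simp only [if_true]; ring
      · rw [hoff i j hij, if_neg hij]; ring
    calc (a - b) * g j + b * S = B (∑ i, g i • v i) (v j) := by
          simp only [map_sum, map_smul, LinearMap.sum_apply, LinearMap.smul_apply, smul_eq_mul,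
            hB, Finset.sum_add_distrib, Finset.sum_ite_eq', Finset.mem_univ, if_true,
            ← Finset.mul_sum, S]
          ring
      _ = 0 := by rw [hg, map_zero, LinearMap.zero_apply]
  have hS : S = 0 := by
    have hsum : ∑ j, ((a - b) * g j + b * S) = 0 := Finset.sum_eq_zero fun j _ => hrow j
    rw [Finset.sum_add_distrib, ← Finset.mul_sum, Finset.sum_const, Finset.card_univ,
      nsmul_eq_mul] at hsum
    replace hsum : (a - b + Fintype.card ι * b) * S = 0 := by linear_combination hsum
    exact (mul_eq_zero.mp hsum).resolve_left hcard
  intro j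
  simpa [hS, hab] using hrow j

theorem affineIndependent_snoc_iff {k V P : Type*} [Ring k] [AddCommGroup V] [Module k V]
    [AddTorsor V P] {n : ℕ} (p : Fin n → P) (q : P) :
    AffineIndependent k (Fin.snoc p q : Fin (n + 1) → P) ↔ LinearIndependent k (p · -ᵥ q) := by
  rw [affineIndependent_iff_linearIndependent_vsub k _ (Fin.last n),
    ← linearIndependent_equiv (finSuccAboveEquiv (Fin.last n))]
  congr! with i
  simp [finSuccAboveEquiv_apply]

theorem phi_eq_dotProduct (n : ℕ) (x y : Fin n → ℂ) : phi n x y = (x - y) ⬝ᵥ (x - y) := by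
  simp [phi, dotProduct, sq]

theorem sub_dotProduct_sub_self {m R : Type*} [Fintype m] [CommRing R] (u w : m → R) :
    (u - w) ⬝ᵥ (u - w) = u ⬝ᵥ u + w ⬝ᵥ w - 2 * u ⬝ᵥ w := by
  simp only [sub_dotProduct, dotProduct_sub, dotProduct_comm w u]
  ring

theorem stmt4 (n : ℕ) (hn : 1 ≤ n) (d : ℝ) (hd : 0 < d)
    (c : Fin n → (Fin n → ℂ)) (c' : Fin n → ℂ)
    (h1 : ∀ i j : Fin n, i < j → phi n (c i) (c j) = (2 + 2 / (n : ℂ)) * (d : ℂ) ^ 2)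
    (h2 : ∀ i : Fin n, phi n (c i) c' = (d : ℂ) ^ 2) :
    AffineIndependent ℂ (Fin.snoc c c') := by
  have hn0 : (n : ℂ) ≠ 0 := Nat.cast_ne_zero.mpr (by omega)
  have hd0 : (d : ℂ) ≠ 0 := Complex.ofReal_ne_zero.mpr hd.ne'
  set v := fun i => c i - c'
  have hdiag : ∀ i, v i ⬝ᵥ v i = (d : ℂ) ^ 2 := fun i => (phi_eq_dotProduct ..).symm.trans (h2 i)
  have hlt : ∀ i j, i < j → v i ⬝ᵥ v j = -(d : ℂ) ^ 2 / n := by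
    intro i j hij
    have h := h1 i j hij
    rw [phi_eq_dotProduct, show c i - c j = v i - v j by simp [v], sub_dotProduct_sub_self,
      hdiag, hdiag] at h
    field_simp at h ⊢
    linear_combination -h / 2
  have hoff : ∀ i j, i ≠ j → v i ⬝ᵥ v j = -(d : ℂ) ^ 2 / n := fun i j hij =>
    hij.lt_or_gt.elim (hlt i j) fun h => (dotProduct_comm ..).trans (hlt j i h)
  rw [affineIndependent_snoc_iff]
  refine linearIndependent_of_bilin_apply_eq (dotProductBilin ℂ ℂ) v hdiag hoff ?_ ?_
  · rw [show (d : ℂ) ^ 2 - -(d : ℂ) ^ 2 / n = (d : ℂ) ^ 2 * (n + 1) / n by field_simp; ring]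
    exact div_ne_zero (mul_ne_zero (pow_ne_zero 2 hd0) (Nat.cast_add_one_ne_zero n)) hn0
  · rw [Fintype.card_fin,
      show (d : ℂ) ^ 2 - -(d : ℂ) ^ 2 / n + n * (-(d : ℂ) ^ 2 / n) = (d : ℂ) ^ 2 / n by
        field_simp; ring]
    exact div_ne_zero (pow_ne_zero 2 hd0) hn0
end

section
/- If points c₀,c₁,...,cₙ ∈ ℂⁿ are affinely independent, and x, y ∈ ℂⁿ satisfy φₙ(x,cᵢ) = φₙ(y,cᵢ) for all i = 0,1,...,n, then x = y. -/
theorem stmt5 (n : ℕ) (c : Fin (n + 1) → (Fin n → ℂ))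
    (hc : AffineIndependent ℂ c) (x y : Fin n → ℂ)
    (h : ∀ i, phi n x (c i) = phi n y (c i)) : x = y := by
  -- key orthogonality
  have key : ∀ i, ∑ j, (x j - y j) * (c i j - c 0 j) = 0 := by
    intro i
    have h1 := h i
    have h2 := h 0
    simp only [phi] at h1 h2
    have e : (-2 : ℂ) * ∑ j, (x j - y j) * (c i j - c 0 j) = 0 := by
      rw [Finset.mul_sum]
      calc ∑ j, (-2 : ℂ) * ((x j - y j) * (c i j - c 0 j))
          = ∑ j, ((x j - c i j)^2 - (y j - c i j)^2
              - ((x j - c 0 j)^2 - (y j - c 0 j)^2)) :=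
            Finset.sum_congr rfl (fun j _ => by ring)
        _ = ((∑ j, (x j - c i j)^2) - (∑ j, (y j - c i j)^2))
              - ((∑ j, (x j - c 0 j)^2) - (∑ j, (y j - c 0 j)^2)) := by
            simp [Finset.sum_sub_distrib]
        _ = 0 := by rw [h1, h2]; ring
    have := mul_eq_zero.mp e
    rcases this with h' | h'
    · norm_num at h'
    · exact h'
  -- linear independence of differences
  rw [affineIndependent_iff_linearIndependent_vsub ℂ c 0] at hc
  have hcard : Fintype.card {i : Fin (n+1) // i ≠ 0} = n := by
    simp [Fintype.card_subtype_compl]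
  have hspan : Submodule.span ℂ (Set.range fun i : {i : Fin (n+1) // i ≠ 0} =>
      c i -ᵥ c 0) = ⊤ := by
    apply hc.span_eq_top_of_card_eq_finrank'
    simp [hcard]
  -- the linear functional w ↦ ∑ (x-y) j * w j
  set f : (Fin n → ℂ) →ₗ[ℂ] ℂ :=
    ∑ j, (x j - y j) • (LinearMap.proj j : (Fin n → ℂ) →ₗ[ℂ] ℂ) with hf
  have hfapp : ∀ w : Fin n → ℂ, f w = ∑ j, (x j - y j) * w j := by
    intro w
    simp [hf, LinearMap.sum_apply, LinearMap.smul_apply]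
  have hfzero : f = 0 := by
    apply LinearMap.ext_on hspan
    rintro w ⟨i, rfl⟩
    have := key i
    simp [hfapp]
    simpa [hfapp, Pi.sub_apply] using key i
  funext j
  have hj : f (Pi.single j 1) = 0 := by rw [hfzero]; rfl
  rw [hfapp] at hj
  have h0 : (x j - y j) = 0 := by
    simpa [Pi.single_apply, Finset.sum_ite_eq', mul_comm] using hj
  exact sub_eq_zero.mp h0
end

section
/- For each integer n ≥ 3, the set {(√(2+2/n))^k · (2/n)^l : k, l non-negative integers} is dense in (0, ∞). -/
/-- Number-theoretic core: no multiplicative relation `(2n+2)^p * 2^(2q) = n^(p+2q)`. -/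
lemma stmt8_nt (n : ℕ) (hn : 3 ≤ n) (p q : ℕ) (hp : 0 < p) :
    (2 * n + 2) ^ p * 2 ^ (2 * q) ≠ n ^ (p + 2 * q) := by
  intro h
  have hn0 : n ≠ 0 := by omega
  have hA0 : 2 * n + 2 ≠ 0 := by omega
  rcases Nat.even_or_odd n with he | ho
  · -- n even: take an odd prime factor ℓ of n+1; it divides 2n+2 but not n.
    set ℓ := (n + 1).minFac with hℓdef
    have hℓp : ℓ.Prime := Nat.minFac_prime (by omega)
    have hℓdvd : ℓ ∣ n + 1 := Nat.minFac_dvd _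
    have hℓ2 : ℓ ≠ 2 := by
      intro h2
      rw [h2] at hℓdvd
      rcases he with ⟨m, hm⟩
      omega
    have hℓn : ¬ ℓ ∣ n := by
      intro hd
      have h1 : ℓ ∣ 1 := by
        have := Nat.dvd_sub hℓdvd hd
        simpa using this
      have := Nat.dvd_one.mp h1
      have := hℓp.one_lt
      omega
    have hℓA : ℓ ∣ 2 * n + 2 := by
      rcases hℓdvd with ⟨c, hc⟩
      refine ⟨2 * c, ?_⟩
      have h2 : 2 * n + 2 = 2 * (n + 1) := by ring
      rw [h2, hc]
      ring
    have hfac := congrArg (fun m => m.factorization ℓ) h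
    simp only [Nat.factorization_mul (pow_ne_zero _ hA0) (pow_ne_zero _ two_ne_zero),
      Nat.factorization_pow, Finsupp.add_apply, Finsupp.smul_apply, smul_eq_mul] at hfac
    have h2ℓ : (2 : ℕ).factorization ℓ = 0 :=
      Nat.factorization_eq_zero_of_not_dvd
        (fun hd => hℓ2 ((Nat.prime_dvd_prime_iff_eq hℓp Nat.prime_two).mp hd))
    have hnℓ : n.factorization ℓ = 0 := Nat.factorization_eq_zero_of_not_dvd hℓn
    have hAℓ : 0 < (2 * n + 2).factorization ℓ := hℓp.factorization_pos_of_dvd hA0 hℓA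
    rw [h2ℓ, hnℓ] at hfac
    nlinarith [hfac, hAℓ, hp]
  · -- n odd: take an odd prime factor ℓ of n; it divides n but not 2n+2.
    set ℓ := n.minFac with hℓdef
    have hℓp : ℓ.Prime := Nat.minFac_prime (by omega)
    have hℓdvd : ℓ ∣ n := Nat.minFac_dvd _
    have hℓ2 : ℓ ≠ 2 := by
      intro h2
      rw [h2] at hℓdvd
      rcases ho with ⟨m, hm⟩
      omega
    have hℓA : ¬ ℓ ∣ 2 * n + 2 := by
      intro hd
      have h2n : ℓ ∣ 2 * n := Dvd.dvd.mul_left hℓdvd 2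
      have h2 : ℓ ∣ 2 := by
        have := Nat.dvd_sub hd h2n
        simpa using this
      exact hℓ2 ((Nat.prime_dvd_prime_iff_eq hℓp Nat.prime_two).mp h2)
    have hfac := congrArg (fun m => m.factorization ℓ) h
    simp only [Nat.factorization_mul (pow_ne_zero _ hA0) (pow_ne_zero _ two_ne_zero),
      Nat.factorization_pow, Finsupp.add_apply, Finsupp.smul_apply, smul_eq_mul] at hfac
    have h2ℓ : (2 : ℕ).factorization ℓ = 0 :=
      Nat.factorization_eq_zero_of_not_dvd
        (fun hd => hℓ2 ((Nat.prime_dvd_prime_iff_eq hℓp Nat.prime_two).mp hd))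
    have hAℓ : (2 * n + 2).factorization ℓ = 0 := Nat.factorization_eq_zero_of_not_dvd hℓA
    have hnℓ : 0 < n.factorization ℓ := hℓp.factorization_pos_of_dvd hn0 hℓdvd
    rw [h2ℓ, hAℓ] at hfac
    nlinarith [hfac, hnℓ, hp]

/-- Small nonzero elements in the ℕ-semigroup generated by α > 0 and β < 0. -/
lemma stmt8_small (α β : ℝ) (hα : 0 < α) (hβ : β < 0)
    (hirr : ∀ p q : ℕ, 0 < p → (p : ℝ) * α + q * β ≠ 0)
    (ε : ℝ) (hε : 0 < ε) :
    ∃ p q : ℕ, 0 < p ∧ (p : ℝ) * α + q * β ≠ 0 ∧ |(p : ℝ) * α + q * β| < ε := by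
  set w : ℝ := -β with hw
  have hw0 : 0 < w := by simp only [hw]; linarith
  obtain ⟨K, hK⟩ := exists_nat_gt (w / ε)
  have hK0 : 0 < K := by
    have h1 : (0 : ℝ) < K := lt_trans (div_pos hw0 hε) hK
    exact_mod_cast h1
  have hKR : (0 : ℝ) < K := by exact_mod_cast hK0
  have hwKε : w / K < ε := by
    rw [div_lt_iff₀ hKR]
    calc w = w / ε * ε := by field_simp
    _ < ε * K := by nlinarith
  set l : ℕ → ℕ := fun k => (⌊(k : ℝ) * α / w⌋).toNat with hl
  set f : ℕ → ℝ := fun k => (k : ℝ) * α + (l k : ℝ) * β with hf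
  have hfloor_nonneg : ∀ k : ℕ, (0 : ℤ) ≤ ⌊(k : ℝ) * α / w⌋ := by
    intro k
    apply Int.floor_nonneg.mpr
    positivity
  have hlval : ∀ k : ℕ, ((l k : ℝ)) = (⌊(k : ℝ) * α / w⌋ : ℝ) := by
    intro k
    simp only [hl]
    exact_mod_cast congrArg (fun z : ℤ => (z : ℝ)) (Int.toNat_of_nonneg (hfloor_nonneg k))
  have hf_eq : ∀ k, f k = w * Int.fract ((k : ℝ) * α / w) := by
    intro k
    simp only [hf, Int.fract]
    rw [hlval k]
    have : β = -w := by simp [hw]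
    rw [this]
    field_simp
    ring
  have hf0 : ∀ k, 0 ≤ f k := by
    intro k; rw [hf_eq]
    exact mul_nonneg hw0.le (Int.fract_nonneg _)
  have hf1 : ∀ k, f k < w := by
    intro k; rw [hf_eq]
    calc w * Int.fract ((k : ℝ) * α / w) < w * 1 :=
          mul_lt_mul_of_pos_left (Int.fract_lt_one _) hw0
    _ = w := mul_one w
  have hlmono : ∀ i j : ℕ, i ≤ j → l i ≤ l j := by
    intro i j hij
    apply Int.toNat_le_toNat
    apply Int.floor_le_floor
    have : (i : ℝ) ≤ j := by exact_mod_cast hij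
    gcongr
  set w' : ℝ := w / K with hw'
  have hw'0 : 0 < w' := div_pos hw0 hKR
  set g : ℕ → ℕ := fun k => (⌊f k / w'⌋).toNat with hg
  have hmaps : ∀ k ∈ Finset.range (K + 1), g k ∈ Finset.range K := by
    intro k _
    simp only [Finset.mem_range, hg]
    have h1 : f k / w' < K := by
      rw [div_lt_iff₀ hw'0, hw']
      calc f k < w := hf1 k
      _ = K * (w / K) := by field_simp
    have h2 : ⌊f k / w'⌋ < (K : ℤ) := Int.floor_lt.mpr (by exact_mod_cast h1)
    omega
  obtain ⟨i, hi, j, hj, hij, hgij⟩ :=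
    Finset.exists_ne_map_eq_of_card_lt_of_maps_to (by simp) hmaps
  wlog hlt : i < j generalizing i j
  · exact this j hj i hi hij.symm hgij.symm (by omega)
  have hfloor : ⌊f j / w'⌋ = ⌊f i / w'⌋ := by
    have h0i : (0 : ℤ) ≤ ⌊f i / w'⌋ := Int.floor_nonneg.mpr (div_nonneg (hf0 i) hw'0.le)
    have h0j : (0 : ℤ) ≤ ⌊f j / w'⌋ := Int.floor_nonneg.mpr (div_nonneg (hf0 j) hw'0.le)
    simp only [hg] at hgij
    omega
  have hclose : |f j - f i| < w' := by
    have h1 := Int.abs_sub_lt_one_of_floor_eq_floor hfloor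
    have heq : f j / w' - f i / w' = (f j - f i) / w' := by ring
    rw [heq, abs_div, abs_of_pos hw'0, div_lt_one hw'0] at h1
    linarith
  have hcast : ((j - i : ℕ) : ℝ) * α + ((l j - l i : ℕ) : ℝ) * β = f j - f i := by
    rw [Nat.cast_sub hlt.le, Nat.cast_sub (hlmono i j hlt.le)]
    simp only [hf]
    ring
  refine ⟨j - i, l j - l i, by omega, hirr _ _ (by omega), ?_⟩
  rw [hcast]
  exact lt_trans hclose hwKε

/-- Density of the ℕ-semigroup generated by α > 0 and β < 0 with no rational relation. -/
lemma stmt8_dense (α β : ℝ) (hα : 0 < α) (hβ : β < 0)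
    (hirr : ∀ p q : ℕ, 0 < p → (p : ℝ) * α + q * β ≠ 0) :
    Dense {y : ℝ | ∃ k l : ℕ, y = (k : ℝ) * α + l * β} := by
  intro t
  rw [Metric.mem_closure_iff]
  intro ε hε
  obtain ⟨p, q, hp, hne, habs⟩ := stmt8_small α β hα hβ hirr ε hε
  set u : ℝ := (p : ℝ) * α + q * β with hu
  rcases hne.lt_or_gt with hneg | hpos
  · -- u < 0 : start from a large multiple of α and step down
    obtain ⟨a, ha⟩ := exists_nat_ge (t / α)
    have haα : t ≤ (a : ℝ) * α := by
      rw [div_le_iff₀ hα] at ha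
      linarith
    have hnu : 0 < -u := by linarith
    have hm0 : (0 : ℤ) ≤ ⌊((a : ℝ) * α - t) / (-u)⌋ :=
      Int.floor_nonneg.mpr (div_nonneg (by linarith) hnu.le)
    set m : ℕ := (⌊((a : ℝ) * α - t) / (-u)⌋).toNat with hm
    have hmval : (m : ℝ) = (⌊((a : ℝ) * α - t) / (-u)⌋ : ℝ) := by
      simp only [hm]
      exact_mod_cast congrArg (fun z : ℤ => (z : ℝ)) (Int.toNat_of_nonneg hm0)
    have hub : ((a : ℝ) * α - t) / (-u) < m + 1 := by
      rw [hmval]; exact Int.lt_floor_add_one _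
    have hlb : (m : ℝ) ≤ ((a : ℝ) * α - t) / (-u) := by
      rw [hmval]; exact Int.floor_le _
    refine ⟨(a : ℝ) * α + m * u, ⟨a + m * p, m * q, by push_cast [hu]; ring⟩, ?_⟩
    rw [Real.dist_eq, abs_lt]
    have h1 : (m : ℝ) * (-u) ≤ (a : ℝ) * α - t := (le_div_iff₀ hnu).mp hlb
    have h2 : (a : ℝ) * α - t < ((m : ℝ) + 1) * (-u) := (div_lt_iff₀ hnu).mp hub
    have h3 : -u ≤ |u| := le_of_eq (abs_of_neg hneg).symm
    constructor <;> nlinarith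
  · -- u > 0 : start from a large multiple of β and step up
    obtain ⟨b, hb⟩ := exists_nat_ge (t / β)
    have hbβ : (b : ℝ) * β ≤ t := by
      rw [div_le_iff_of_neg hβ] at hb
      linarith
    have hm0 : (0 : ℤ) ≤ ⌊(t - (b : ℝ) * β) / u⌋ :=
      Int.floor_nonneg.mpr (div_nonneg (by linarith) hpos.le)
    set m : ℕ := (⌊(t - (b : ℝ) * β) / u⌋).toNat with hm
    have hmval : (m : ℝ) = (⌊(t - (b : ℝ) * β) / u⌋ : ℝ) := by
      simp only [hm]
      exact_mod_cast congrArg (fun z : ℤ => (z : ℝ)) (Int.toNat_of_nonneg hm0)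
    have hub : (t - (b : ℝ) * β) / u < m + 1 := by
      rw [hmval]; exact Int.lt_floor_add_one _
    have hlb : (m : ℝ) ≤ (t - (b : ℝ) * β) / u := by
      rw [hmval]; exact Int.floor_le _
    refine ⟨(b : ℝ) * β + m * u, ⟨m * p, b + m * q, by push_cast [hu]; ring⟩, ?_⟩
    rw [Real.dist_eq, abs_lt]
    have h1 : (m : ℝ) * u ≤ t - (b : ℝ) * β := (le_div_iff₀ hpos).mp hlb
    have h2 : t - (b : ℝ) * β < ((m : ℝ) + 1) * u := (div_lt_iff₀ hpos).mp hub
    have h3 : u ≤ |u| := le_abs_self u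
    constructor <;> nlinarith

theorem stmt8 (n : ℕ) (hn : 3 ≤ n) :
    ∀ x : ℝ, 0 < x →
      x ∈ closure {y : ℝ | ∃ k l : ℕ,
        y = (Real.sqrt (2 + 2 / n)) ^ k * (2 / (n : ℝ)) ^ l} := by
  intro x hx
  have hn3 : (3 : ℝ) ≤ (n : ℝ) := by exact_mod_cast hn
  have hnpos : (0 : ℝ) < n := by linarith
  set a : ℝ := Real.sqrt (2 + 2 / n) with hadef
  set b : ℝ := 2 / (n : ℝ) with hbdef
  have hb0 : 0 < b := by positivity
  have hb1 : b < 1 := by rw [hbdef, div_lt_one hnpos]; linarith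
  have ha2 : a ^ 2 = 2 + 2 / n := Real.sq_sqrt (by positivity)
  have ha1 : 1 < a := by
    nlinarith [Real.sqrt_nonneg (2 + 2 / (n : ℝ)), ha2, div_pos (by norm_num : (0:ℝ) < 2) hnpos]
  have ha0 : 0 < a := lt_trans one_pos ha1
  set α := Real.log a with hαdef
  set β := Real.log b with hβdef
  have hαpos : 0 < α := Real.log_pos ha1
  have hβneg : β < 0 := Real.log_neg hb0 hb1
  have hirr : ∀ p q : ℕ, 0 < p → (p : ℝ) * α + q * β ≠ 0 := by
    intro p q hp heq
    have hlog : Real.log (a ^ p * b ^ q) = 0 := by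
      rw [Real.log_mul (by positivity) (by positivity), Real.log_pow, Real.log_pow]
      push_cast
      linarith
    have hab1 : a ^ p * b ^ q = 1 := by
      have hposab : 0 < a ^ p * b ^ q := by positivity
      have h := Real.exp_log hposab
      rw [← h, hlog, Real.exp_zero]
    have hsq : (a ^ 2) ^ p * (b ^ 2) ^ q = 1 := by
      rw [← pow_mul, ← pow_mul, mul_comm 2 p, mul_comm 2 q, pow_mul, pow_mul,
        ← mul_pow, hab1, one_pow]
    rw [ha2, hbdef] at hsq
    have hne : (n : ℝ) ≠ 0 := ne_of_gt hnpos
    have key : (2 * (n : ℝ) + 2) ^ p * 2 ^ (2 * q) = (n : ℝ) ^ (p + 2 * q) := by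
      have h1 : (2 + 2 / (n : ℝ)) = (2 * n + 2) / n := by field_simp
      have h2 : ((2 / (n : ℝ)) ^ 2) ^ q = 2 ^ (2 * q) / (n : ℝ) ^ (2 * q) := by
        rw [div_pow, div_pow, ← pow_mul, ← pow_mul]
      rw [h1, h2, div_pow] at hsq
      rw [div_mul_div_comm, div_eq_one_iff_eq (by positivity)] at hsq
      rw [hsq, pow_add]
    have keyN : (2 * n + 2) ^ p * 2 ^ (2 * q) = n ^ (p + 2 * q) := by
      exact_mod_cast key
    exact stmt8_nt n hn p q hp keyN
  have hdense := stmt8_dense α β hαpos hβneg hirr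
  have ht : Real.log x ∈ closure {y : ℝ | ∃ k l : ℕ, y = (k : ℝ) * α + l * β} := hdense _
  have himg : Real.exp '' {y : ℝ | ∃ k l : ℕ, y = (k : ℝ) * α + l * β} ⊆
      {y : ℝ | ∃ k l : ℕ, y = a ^ k * b ^ l} := by
    rintro _ ⟨y, ⟨k, l, rfl⟩, rfl⟩
    refine ⟨k, l, ?_⟩
    rw [Real.exp_add, Real.exp_nat_mul, Real.exp_nat_mul, hαdef, hβdef,
      Real.exp_log ha0, Real.exp_log hb0]
  have hxeq : x = Real.exp (Real.log x) := (Real.exp_log hx).symm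
  rw [hxeq]
  exact closure_mono himg
    (image_closure_subset_closure_image Real.continuous_exp ⟨_, ht, rfl⟩)
end

section
/- For each integer n ≥ 3, the real number log(2/n)/log(√(2+2/n)) is irrational and negative. -/
theorem stmt9 (n : ℕ) (hn : 3 ≤ n) :
    Irrational (Real.log (2 / n) / Real.log (Real.sqrt (2 + 2 / n))) ∧
      Real.log (2 / n) / Real.log (Real.sqrt (2 + 2 / n)) < 0 := by
  have hn0 : (0:ℝ) < n := by positivity
  have hnR : (3:ℝ) ≤ n := by exact_mod_cast hn
  set a : ℝ := 2 / n with ha_def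
  set b : ℝ := 2 + 2 / n with hb_def
  have ha_pos : 0 < a := by positivity
  have ha_lt1 : a < 1 := by
    rw [ha_def, div_lt_one hn0]; linarith
  have hb_gt1 : (1:ℝ) < b := by
    have : 0 < 2 / (n:ℝ) := by positivity
    rw [hb_def]; linarith
  have hb_pos : (0:ℝ) < b := by linarith
  have hsqrt_gt1 : 1 < Real.sqrt b := by
    rw [show (1:ℝ) = Real.sqrt 1 by simp]
    exact Real.sqrt_lt_sqrt (by norm_num) hb_gt1
  have hsqrt_pos : 0 < Real.sqrt b := by linarith
  have hlog_a_neg : Real.log a < 0 := Real.log_neg ha_pos ha_lt1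
  have hlog_s_pos : 0 < Real.log (Real.sqrt b) := Real.log_pos hsqrt_gt1
  have hneg : Real.log a / Real.log (Real.sqrt b) < 0 :=
    div_neg_of_neg_of_pos hlog_a_neg hlog_s_pos
  refine ⟨?_, hneg⟩
  rintro ⟨q, hq⟩
  have hqneg : (q:ℝ) < 0 := by rw [hq]; exact hneg
  have hq0 : q < 0 := by exact_mod_cast hqneg
  have hnum_neg : q.num < 0 := Rat.num_neg.mpr hq0
  set m : ℕ := (-q.num).toNat with hm_def
  have hm1 : 1 ≤ m := by omega
  have hnum : q.num = -(m:ℤ) := by omega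
  set d : ℕ := q.den with hd_def
  have hd1 : 1 ≤ d := q.pos
  -- log a = q * log √b
  have h1 : Real.log a = (q:ℝ) * Real.log (Real.sqrt b) := by
    field_simp at hq
    linarith [hq]
  -- a = √b ^ (q : ℝ)
  have h2 : a = Real.sqrt b ^ (q:ℝ) := by
    rw [Real.rpow_def_of_pos hsqrt_pos, mul_comm, ← h1, Real.exp_log ha_pos]
  -- a ^ (2d) = b ^ q.num  (zpow)
  have h3 : a ^ (2*d) = b ^ (q.num) := by
    have e1 : a ^ (2*d) = Real.sqrt b ^ ((q:ℝ) * (2*d : ℕ)) := by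
      rw [h2, ← Real.rpow_natCast (Real.sqrt b ^ (q:ℝ)) (2*d),
        ← Real.rpow_mul (le_of_lt hsqrt_pos)]
    have e2 : (q:ℝ) * ((2*d : ℕ) : ℝ) = ((2 * q.num : ℤ) : ℝ) := by
      have : (q:ℝ) = (q.num : ℝ) / (q.den : ℝ) := Rat.cast_def q
      rw [this, hd_def]
      have : (q.den : ℝ) ≠ 0 := by exact_mod_cast q.den_nz
      push_cast
      field_simp
    rw [e1, e2, Real.rpow_intCast, show (2 * q.num : ℤ) = (2:ℤ) * q.num from rfl,
      zpow_mul]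
    congr 1
    rw [show ((2:ℤ)) = ((2:ℕ):ℤ) from rfl, zpow_natCast, Real.sq_sqrt (le_of_lt hb_pos)]
  -- a ^ (2d) * b ^ m = 1
  have h4 : a ^ (2*d) * b ^ m = 1 := by
    rw [h3, hnum, zpow_neg, zpow_natCast, inv_mul_cancel₀ (by positivity)]
  -- clear denominators
  have h5 : (2:ℝ)^(2*d) * (2*n+2)^m = (n:ℝ)^(2*d+m) := by
    have hb' : b = (2*n+2)/n := by rw [hb_def]; field_simp
    rw [ha_def, hb'] at h4
    rw [div_pow, div_pow, div_mul_div_comm] at h4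
    rw [div_eq_one_iff_eq (by positivity)] at h4
    rw [h4, ← pow_add]
  have h6 : 2^(2*d) * (2*n+2)^m = n^(2*d+m) := by exact_mod_cast h5
  -- contradiction by coprimality
  have hdvd : (n+1) ∣ n^(2*d+m) := by
    rw [← h6]
    have : (n+1) ∣ (2*n+2)^m := by
      refine dvd_pow ?_ (by omega)
      exact ⟨2, by ring⟩
    exact Dvd.dvd.mul_left this _
  have hcop1 : Nat.Coprime (n+1) n := by
    show Nat.gcd (n+1) n = 1
    rw [add_comm, Nat.gcd_add_self_left, Nat.gcd_one_left]
  have hcop : Nat.Coprime (n+1) (n^(2*d+m)) := Nat.Coprime.pow_right _ hcop1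
  have := hcop.eq_one_of_dvd hdvd
  omega
end

section
/- Let n ≥ 2 and d > 0. The determinant of the (n+3)×(n+3) matrix M with M₀₀ = 0, M₀ⱼ = Mⱼ₀ = 1 for j ≥ 1, diagonal entries Mⱼⱼ = 0 for j ≥ 1, M₁,ₙ₊₂ = Mₙ₊₂,₁ = t, and all other off-diagonal entries (among rows/columns 1..n+2) equal to d², equals (−1)^{n−1}·d^{2n−2}·t·(n·t − (2n+2)·d²). -/
/-!
Reorder the indices so that the border index and the two special points come first, followed
by the `n` other points. The matrix becomes a block matrix whose `3 × 3` block `A` involves only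
`t`, whose `n × n` block is `D = d²(J - I)` with all column sums `(n - 1)d²`, and whose
off-diagonal blocks are `w 1ᵀ` and `1 wᵀ` with `w = (1, d², d²)`. A unipotent block row
operation clears `w 1ᵀ` and leaves `det D · det (A - n / ((n - 1)d²) • w wᵀ)`, a product of
two explicit determinants.
-/

/-- Cayley-Menger matrix of n+2 points where all pairwise values are d²
except the value between the first and last point, which is t. -/
noncomputable def M11 (n : ℕ) (d t : ℂ) : Matrix (Fin (n + 3)) (Fin (n + 3)) ℂ :=
  Matrix.of fun i j =>
    if i = 0 then (if j = 0 then 0 else 1)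
    else if j = 0 then 1
    else if i = j then 0
    else if (i = 1 ∧ j = Fin.last (n + 2)) ∨ (i = Fin.last (n + 2) ∧ j = 1) then t
    else d ^ 2

open Matrix

theorem Matrix.det_fromBlocks_vecMulVec_one {K m ι : Type*} [Field K] [Fintype m] [DecidableEq m]
    [Fintype ι] [DecidableEq ι] (A : Matrix m m K) (D : Matrix ι ι K) (u v : m → K) {c : K}
    (hc : c ≠ 0) (hD : 1 ᵥ* D = c • 1) :
    (fromBlocks A (vecMulVec u 1) (vecMulVec 1 v) D).det =
      (A - (Fintype.card ι / c) • vecMulVec u v).det * D.det := by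
  set X : Matrix m ι K := -c⁻¹ • vecMulVec u 1
  have hXB : X * vecMulVec (1 : ι → K) v = -(Fintype.card ι / c) • vecMulVec u v := by
    rw [Matrix.smul_mul, vecMulVec_mul_vecMulVec, one_dotProduct_one, vecMulVec_smul, smul_smul,
      div_eq_inv_mul, neg_mul]
  have hXD : X * D = -vecMulVec u 1 := by
    rw [Matrix.smul_mul, vecMulVec_mul, hD, vecMulVec_smul, smul_smul, neg_mul, inv_mul_cancel₀ hc,
      neg_smul, one_smul]
  calc (fromBlocks A (vecMulVec u 1) (vecMulVec 1 v) D).det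
      = (fromBlocks 1 X 0 1 * fromBlocks A (vecMulVec u 1) (vecMulVec 1 v) D).det := by
        simp [det_mul]
    _ = (fromBlocks (A - (Fintype.card ι / c) • vecMulVec u v) 0 (vecMulVec 1 v) D).det := by
        simp only [fromBlocks_multiply, hXB, hXD, Matrix.one_mul, Matrix.zero_mul, zero_add,
          add_neg_cancel, sub_eq_add_neg, neg_smul]
    _ = _ := det_fromBlocks_zero₁₂ _ _ _

theorem Matrix.one_vecMul_of_ite_eq_zero {K ι : Type*} [CommRing K] [Fintype ι] [DecidableEq ι]
    (b : K) : 1 ᵥ* (of fun i j : ι => if i = j then 0 else b) = ((Fintype.card ι - 1) * b) • 1 := by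
  ext j
  have : Nonempty ι := ⟨j⟩
  simp [vecMul, dotProduct, Finset.sum_ite, Finset.filter_ne', Nat.cast_sub Fintype.card_pos,
    sub_mul]

theorem Matrix.det_of_ite_eq_zero {K ι : Type*} [CommRing K] [Fintype ι] [DecidableEq ι] (b : K) :
    (of fun i j : ι => if i = j then 0 else b).det =
      (-b) ^ Fintype.card ι * (1 - Fintype.card ι) := by
  have h : (of fun i j : ι => if i = j then 0 else b) =
      (-b) • (1 + (replicateCol Unit (-1 : ι → K) * replicateRow Unit (1 : ι → K) :
        Matrix ι ι K)) := by
    ext i j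
    by_cases h : i = j <;> simp [h, mul_apply]
  rw [h, det_smul, det_one_add_replicateCol_mul_replicateRow]
  simp [sub_eq_add_neg]

theorem Matrix.det_fin_three_sub_smul_vecMulVec {K : Type*} [CommRing K] (s a t : K) :
    (!![0, 1, 1; 1, 0, t; 1, t, 0] - s • vecMulVec ![1, a, a] ![1, a, a]).det =
      (s * t - 4 * s * a + 2) * t := by
  rw [det_fin_three]
  simp
  ring

def cmBlockIndex (n : ℕ) : Fin 3 ⊕ Fin n → Fin (n + 3) :=
  Sum.elim ![0, 1, Fin.last (n + 2)] fun k => ⟨k + 2, by omega⟩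

theorem cmBlockIndex_injective (n : ℕ) : Function.Injective (cmBlockIndex n) := by
  rintro (a | k) (b | l) h
  all_goals try fin_cases a
  all_goals try fin_cases b
  all_goals simp [cmBlockIndex, Fin.ext_iff] at h ⊢; try omega

noncomputable def cmBlockEquiv (n : ℕ) : Fin 3 ⊕ Fin n ≃ Fin (n + 3) :=
  Equiv.ofBijective (cmBlockIndex n) <|
    (Fintype.bijective_iff_injective_and_card _).mpr ⟨cmBlockIndex_injective n, by simp [add_comm]⟩

theorem M11_submatrix_cmBlockEquiv (n : ℕ) (d t : ℂ) :
    (M11 n d t).submatrix (cmBlockEquiv n) (cmBlockEquiv n) =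
      fromBlocks !![0, 1, 1; 1, 0, t; 1, t, 0] (vecMulVec ![1, d ^ 2, d ^ 2] 1)
        (vecMulVec 1 ![1, d ^ 2, d ^ 2]) (of fun i j => if i = j then 0 else d ^ 2) := by
  ext (a | k) (b | l)
  all_goals try fin_cases a
  all_goals try fin_cases b
  all_goals simp only [M11, cmBlockEquiv, cmBlockIndex, Equiv.coe_ofBijective, submatrix_apply,
    Sum.elim_inl, Sum.elim_inr, of_apply, fromBlocks_apply₁₁, fromBlocks_apply₁₂,
    fromBlocks_apply₂₁, fromBlocks_apply₂₂, vecMulVec_apply]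
  all_goals simp [Fin.ext_iff]
  all_goals omega

theorem stmt11 (n : ℕ) (hn : 2 ≤ n) (d : ℝ) (hd : 0 < d) (t : ℂ) :
    Matrix.det (M11 n (d : ℂ) t) =
      (-1 : ℂ) ^ (n - 1) * (d : ℂ) ^ (2 * n - 2) * t *
        ((n : ℂ) * t - (2 * (n : ℂ) + 2) * (d : ℂ) ^ 2) := by
  obtain ⟨m, rfl⟩ : ∃ m, n = m + 2 := ⟨n - 2, by omega⟩
  have hd0 : (d : ℂ) ≠ 0 := by exact_mod_cast hd.ne'
  have hm : (m : ℂ) + 1 ≠ 0 := Nat.cast_add_one_ne_zero m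
  have hcard : (Fintype.card (Fin (m + 2)) : ℂ) - 1 = m + 1 := by
    rw [Fintype.card_fin]; push_cast; ring
  have hc : ((Fintype.card (Fin (m + 2)) : ℂ) - 1) * (d : ℂ) ^ 2 ≠ 0 := by
    rw [hcard]; exact mul_ne_zero hm (pow_ne_zero _ hd0)
  rw [← det_submatrix_equiv_self (cmBlockEquiv (m + 2)), M11_submatrix_cmBlockEquiv,
    det_fromBlocks_vecMulVec_one _ _ _ _ hc (one_vecMul_of_ite_eq_zero _),
    det_fin_three_sub_smul_vecMulVec, det_of_ite_eq_zero, hcard, Fintype.card_fin,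
    show 2 * (m + 2) - 2 = 2 * (m + 1) by omega, show m + 2 - 1 = m + 1 by omega]
  field_simp
  push_cast
  ring
end

section
/- Let n ≥ 2 and d > 0. Suppose f maps points x, p₁,...,pₙ, y ∈ ℝⁿ to ℂⁿ such that φₙ(f(x),f(pᵢ)) = φₙ(f(y),f(pᵢ)) = d² for all i, and φₙ(f(pᵢ),f(pⱼ)) = d² for all i < j. Then φₙ(f(x),f(y)) = (2+2/n)·d² or φₙ(f(x),f(y)) = 0. -/
open Matrix

lemma phi_comm (n : ℕ) (x y : Fin n → ℂ) : phi n x y = phi n y x := by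
  simp only [phi]
  congr 1 with i
  ring

lemma phi_self (n : ℕ) (x : Fin n → ℂ) : phi n x x = 0 := by
  simp [phi]

lemma two_mul_sub_dotProduct_sub (n : ℕ) (x p q : Fin n → ℂ) :
    2 * ((p - x) ⬝ᵥ (q - x)) = phi n x p + phi n x q - phi n p q := by
  simp only [phi, dotProduct, Pi.sub_apply, Finset.mul_sum, ← Finset.sum_add_distrib,
    ← Finset.sum_sub_distrib]
  congr 1 with i
  ring

lemma exists_relation_of_card_succ {K : Type*} [Field K] {n : ℕ} (u : Fin n → Fin n → K)
    (w : Fin n → K) :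
    ∃ (c : Fin n → K) (c₀ : K), (c₀ ≠ 0 ∨ c ≠ 0) ∧ c₀ • w + ∑ i, c i • u i = 0 := by
  have hdep : ¬ LinearIndependent K (Fin.cons w u : Fin (n + 1) → Fin n → K) := fun h => by
    simpa using h.fintype_card_le_finrank
  obtain ⟨g, hg, k, hk⟩ := Fintype.not_linearIndependent_iff.mp hdep
  refine ⟨fun i => g i.succ, g 0, ?_, by simpa [Fin.sum_univ_succ] using hg⟩
  cases k using Fin.cases with
  | zero => exact Or.inl hk
  | succ k => exact Or.inr fun hc => hk (congrFun hc k)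

lemma sum_mul_dotProduct_eq_zero {K : Type*} [Field K] {n : ℕ} {u : Fin n → Fin n → K}
    {w : Fin n → K} {c : Fin n → K} {c₀ : K} (hrel : c₀ • w + ∑ i, c i • u i = 0)
    (z : Fin n → K) : c₀ * (w ⬝ᵥ z) + ∑ i, c i * (u i ⬝ᵥ z) = 0 := by
  simpa [add_dotProduct, sum_dotProduct, smul_dotProduct] using congrArg (· ⬝ᵥ z) hrel

lemma eq_of_regular_simplex_relation {K : Type*} [Field K] [CharZero K] {n : ℕ} {D T : K}
    (hD : D ≠ 0) (hT : T ≠ 0) {c : Fin n → K} {c₀ : K} (hc : c₀ ≠ 0 ∨ c ≠ 0)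
    (hu : ∀ j, c₀ * T + D * (c j + ∑ i, c i) = 0)
    (hw : c₀ * (2 * T) + (∑ i, c i) * T = 0) :
    T = (2 + 2 / n) * D := by
  set S := ∑ i, c i with hS
  have hS₀ : S = -2 * c₀ := mul_left_cancel₀ hT (by linear_combination hw)
  have hc_eq : ∀ j, c j = c₀ * (2 - T / D) := fun j => by
    field_simp
    linear_combination hu j - D * hS₀
  have hsum : S = n * (c₀ * (2 - T / D)) := by simp [hS, hc_eq]
  have hc₀ : c₀ ≠ 0 := by
    rintro rfl
    exact hc.resolve_left (not_not.mpr rfl) (funext fun j => by simp [hc_eq j])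
  have hn : n * (2 - T / D) = -2 := by
    apply mul_left_cancel₀ hc₀
    linear_combination hS₀.symm.trans hsum |>.symm
  have hn₀ : (n : K) ≠ 0 := by
    intro h
    simp [h] at hn
  field_simp at hn ⊢
  linear_combination -hn

lemma eq_of_regular_simplex_gram {K : Type*} [Field K] [CharZero K] {n : ℕ} {D T : K}
    (hD : D ≠ 0) (hT : T ≠ 0) (u : Fin n → Fin n → K) (w : Fin n → K)
    (huu : ∀ i j, 2 * (u i ⬝ᵥ u j) = D * (1 + if i = j then 1 else 0))
    (hwu : ∀ j, 2 * (w ⬝ᵥ u j) = T) (hww : w ⬝ᵥ w = T) :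
    T = (2 + 2 / n) * D := by
  obtain ⟨c, c₀, hc, hrel⟩ := exists_relation_of_card_succ u w
  have hpair (z : Fin n → K) : c₀ * (2 * (w ⬝ᵥ z)) + ∑ i, c i * (2 * (u i ⬝ᵥ z)) = 0 := by
    simpa only [mul_add, Finset.mul_sum, mul_left_comm (2 : K)] using
      mul_eq_zero_of_right 2 (sum_mul_dotProduct_eq_zero hrel z)
  refine eq_of_regular_simplex_relation hD hT hc (fun j => ?_) ?_
  · have h := hpair (u j)
    simp only [hwu, huu, mul_add, mul_one, Finset.sum_add_distrib, mul_ite, mul_zero,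
      Finset.sum_ite_eq', Finset.mem_univ, if_true, ← Finset.sum_mul] at h
    linear_combination h
  · simpa [hww, dotProduct_comm (u _) w, hwu, Finset.sum_mul] using hpair w

theorem stmt13_general (n : ℕ) (d : ℝ) (hd : 0 < d)
    (fx fy : Fin n → ℂ) (fp : Fin n → (Fin n → ℂ))
    (h1 : ∀ i, phi n fx (fp i) = (d : ℂ) ^ 2)
    (h2 : ∀ i, phi n fy (fp i) = (d : ℂ) ^ 2)
    (h3 : ∀ i j : Fin n, i < j → phi n (fp i) (fp j) = (d : ℂ) ^ 2) :
    phi n fx fy = (2 + 2 / (n : ℂ)) * (d : ℂ) ^ 2 ∨ phi n fx fy = 0 := by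
  refine or_iff_not_imp_right.mpr fun hT => ?_
  refine eq_of_regular_simplex_gram (by simp [hd.ne']) hT (fun i => fp i - fx) (fy - fx)
    (fun i j => ?_) (fun j => ?_) ?_
  · rw [two_mul_sub_dotProduct_sub, h1, h1]
    rcases lt_trichotomy i j with hij | rfl | hij
    · rw [h3 i j hij, if_neg hij.ne]; ring
    · rw [phi_self, if_pos rfl]; ring
    · rw [phi_comm, h3 j i hij, if_neg hij.ne']; ring
  · rw [dotProduct_comm, two_mul_sub_dotProduct_sub, h1, phi_comm n (fp j), h2]; ring
  · apply mul_left_cancel₀ (two_ne_zero (α := ℂ))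
    rw [two_mul_sub_dotProduct_sub, phi_self]; ring

theorem stmt13 (n : ℕ) (hn : 2 ≤ n) (d : ℝ) (hd : 0 < d)
    (fx fy : Fin n → ℂ) (fp : Fin n → (Fin n → ℂ))
    (h1 : ∀ i, phi n fx (fp i) = (d : ℂ) ^ 2)
    (h2 : ∀ i, phi n fy (fp i) = (d : ℂ) ^ 2)
    (h3 : ∀ i j : Fin n, i < j → phi n (fp i) (fp j) = (d : ℂ) ^ 2) :
    phi n fx fy = (2 + 2 / (n : ℂ)) * (d : ℂ) ^ 2 ∨ phi n fx fy = 0 :=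
  stmt13_general n d hd fx fy fp h1 h2 h3
end

section
/- Let n ≥ 2 and d > 0. Suppose points a, c₁,...,cₙ, b ∈ ℂⁿ satisfy φₙ(a,cᵢ) = φₙ(b,cᵢ) = d² for all i, and φₙ(cᵢ,cⱼ) = (2+2/n)·d² for all i < j. Then φₙ(a,b) = (4/n²)·d² or φₙ(a,b) = 0. -/
open Matrix

namespace Matrix

variable {K ι : Type*} [Field K] [Fintype ι] [DecidableEq ι] {v : ι → ι → K} {α β : K}

lemma dotProduct_sum_of_dotProduct_eq_ite (hv : ∀ i j, v i ⬝ᵥ v j = if i = j then α else β)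
    (j : ι) :
    v j ⬝ᵥ ∑ i, v i = α - β + Fintype.card ι * β := by
  have hsplit : ∀ i, v j ⬝ᵥ v i = (if j = i then α - β else 0) + β := by
    intro i; rw [hv]; split_ifs <;> ring
  simp only [dotProduct_sum, hsplit, Finset.sum_add_distrib, Finset.sum_ite_eq,
    Finset.mem_univ, if_true, Finset.sum_const, Finset.card_univ, nsmul_eq_mul]

lemma of_mul_transpose_eq_of_dotProduct_eq_ite
    (hv : ∀ i j, v i ⬝ᵥ v j = if i = j then α else β) :
    of v * (of v)ᵀ = (α - β) • (1 : Matrix ι ι K) + β • of fun _ _ => 1 := by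
  ext i j
  rw [show (of v * (of v)ᵀ) i j = v i ⬝ᵥ v j from rfl, hv]
  by_cases h : i = j <;> simp [h]

lemma det_ne_zero_of_dotProduct_eq_ite (hv : ∀ i j, v i ⬝ᵥ v j = if i = j then α else β)
    (hαβ : α - β ≠ 0) (hγ : α - β + Fintype.card ι * β ≠ 0) :
    (of v).det ≠ 0 := by
  have hJJ : (of fun _ _ => 1 : Matrix ι ι K) * of (fun _ _ => 1) =
      (Fintype.card ι : K) • of fun _ _ => 1 := by
    ext; simp [mul_apply]
  set γ := α - β + Fintype.card ι * β with hγ_def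
  have hinv : of v * (of v)ᵀ * ((α - β)⁻¹ • (1 - (β / γ) • of fun _ _ => 1)) = 1 := by
    rw [of_mul_transpose_eq_of_dotProduct_eq_ite hv]
    simp only [Matrix.mul_smul, Matrix.mul_sub, Matrix.add_mul, Matrix.smul_mul, Matrix.mul_one,
      Matrix.one_mul, hJJ]
    match_scalars <;> field_simp
    rw [hγ_def]; ring
  have hunit := isUnit_det_of_right_inverse hinv
  rw [det_mul, det_transpose] at hunit
  exact (isUnit_of_mul_isUnit_left hunit).ne_zero

lemma eq_smul_sum_of_dotProduct_eq (hv : ∀ i j, v i ⬝ᵥ v j = if i = j then α else β)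
    (hαβ : α - β ≠ 0) (hγ : α - β + Fintype.card ι * β ≠ 0) {w : ι → K} {s : K}
    (hw : ∀ i, v i ⬝ᵥ w = s) :
    w = (s / (α - β + Fintype.card ι * β)) • ∑ i, v i := by
  refine sub_eq_zero.mp
    (eq_zero_of_mulVec_eq_zero (det_ne_zero_of_dotProduct_eq_ite hv hαβ hγ) ?_)
  ext j
  rw [show (of v *ᵥ _) j = v j ⬝ᵥ _ from rfl, dotProduct_sub, dotProduct_smul, hw,
    dotProduct_sum_of_dotProduct_eq_ite hv, smul_eq_mul, div_mul_cancel₀ _ hγ, sub_self,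
    Pi.zero_apply]

lemma dotProduct_self_eq_zero_or_of_dotProduct_eq
    (hv : ∀ i j, v i ⬝ᵥ v j = if i = j then α else β)
    (hαβ : α - β ≠ 0) (hγ : α - β + Fintype.card ι * β ≠ 0) {w : ι → K} {s : K}
    (hw : ∀ i, v i ⬝ᵥ w = s) (hs : w ⬝ᵥ w = 2 * s) :
    w ⬝ᵥ w = 0 ∨ Fintype.card ι * (w ⬝ᵥ w) = 4 * (α - β + Fintype.card ι * β) := by
  have hsum : (∑ i, v i) ⬝ᵥ w = Fintype.card ι * s := by
    simp [sum_dotProduct, hw]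
  have hquad : 2 * s = s / (α - β + Fintype.card ι * β) * (Fintype.card ι * s) := by
    rw [← hs, ← hsum]
    nth_rewrite 1 [eq_smul_sum_of_dotProduct_eq hv hαβ hγ hw]
    rw [smul_dotProduct, smul_eq_mul]
  rcases eq_or_ne s 0 with hs0 | hs0
  · left; rw [hs, hs0, mul_zero]
  · right
    rw [div_mul_eq_mul_div, eq_div_iff hγ] at hquad
    have hlin : 2 * (α - β + Fintype.card ι * β) = Fintype.card ι * s :=
      mul_left_cancel₀ hs0 (by linear_combination hquad)
    rw [hs]
    linear_combination -2 * hlin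

end Matrix

lemma phi_eq_dotProduct_sub {n : ℕ} (x y : Fin n → ℂ) : phi n x y = (y - x) ⬝ᵥ (y - x) := by
  simp only [phi, dotProduct, Pi.sub_apply, sq]
  exact Finset.sum_congr rfl fun i _ => by ring

lemma phi_eq_phi_add_phi_sub_two_mul_dotProduct {n : ℕ} (a x y : Fin n → ℂ) :
    phi n x y = phi n a x + phi n a y - 2 * ((x - a) ⬝ᵥ (y - a)) := by
  simp only [phi, dotProduct, Pi.sub_apply, Finset.mul_sum, ← Finset.sum_add_distrib,
    ← Finset.sum_sub_distrib]
  exact Finset.sum_congr rfl fun i _ => by ring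

lemma dotProduct_sub_sub_eq_ite_of_phi {n : ℕ} {a : Fin n → ℂ} {c : Fin n → Fin n → ℂ}
    {r t : ℂ} (ha : ∀ i, phi n a (c i) = r) (hc : ∀ i j, i < j → phi n (c i) (c j) = t)
    (i j : Fin n) : (c i - a) ⬝ᵥ (c j - a) = if i = j then r else r - t / 2 := by
  have hne : ∀ i j, i < j → (c i - a) ⬝ᵥ (c j - a) = r - t / 2 := by
    intro i j hij
    have h := hc i j hij
    rw [phi_eq_phi_add_phi_sub_two_mul_dotProduct a, ha, ha] at h
    linear_combination -h / 2
  rcases lt_trichotomy i j with hij | rfl | hij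
  · rw [if_neg hij.ne, hne i j hij]
  · rw [if_pos rfl, ← ha i, phi_eq_dotProduct_sub]
  · rw [if_neg hij.ne', dotProduct_comm, hne j i hij]

lemma dotProduct_sub_sub_eq_phi_div_two {n : ℕ} {a b x : Fin n → ℂ}
    (h : phi n a x = phi n b x) : (x - a) ⬝ᵥ (b - a) = phi n a b / 2 := by
  have hb := phi_eq_phi_add_phi_sub_two_mul_dotProduct a b x
  rw [← h, dotProduct_comm] at hb
  linear_combination hb / 2

theorem stmt14 (n : ℕ) (hn : 2 ≤ n) (d : ℝ) (hd : 0 < d)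
    (a b : Fin n → ℂ) (c : Fin n → (Fin n → ℂ))
    (h1 : ∀ i, phi n a (c i) = (d : ℂ) ^ 2)
    (h2 : ∀ i, phi n b (c i) = (d : ℂ) ^ 2)
    (h3 : ∀ i j : Fin n, i < j → phi n (c i) (c j) = (2 + 2 / (n : ℂ)) * (d : ℂ) ^ 2) :
    phi n a b = (4 / (n : ℂ) ^ 2) * (d : ℂ) ^ 2 ∨ phi n a b = 0 := by
  have hn0 : (n : ℂ) ≠ 0 := Nat.cast_ne_zero.mpr (by omega)
  have hβ : (d : ℂ) ^ 2 - (2 + 2 / (n : ℂ)) * (d : ℂ) ^ 2 / 2 = -((d : ℂ) ^ 2 / n) := by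
    ring
  have hv i j := hβ ▸ dotProduct_sub_sub_eq_ite_of_phi h1 h3 i j
  have hw i : (c i - a) ⬝ᵥ (b - a) = phi n a b / 2 :=
    dotProduct_sub_sub_eq_phi_div_two ((h1 i).trans (h2 i).symm)
  have hww : (b - a) ⬝ᵥ (b - a) = 2 * (phi n a b / 2) := by
    rw [← phi_eq_dotProduct_sub]; ring
  have hαβ : (d : ℂ) ^ 2 - -((d : ℂ) ^ 2 / n) ≠ 0 := by
    rw [sub_neg_eq_add]; exact_mod_cast (by positivity : (0 : ℝ) < d ^ 2 + d ^ 2 / n).ne'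
  have hγ : (d : ℂ) ^ 2 - -((d : ℂ) ^ 2 / n) + Fintype.card (Fin n) * -((d : ℂ) ^ 2 / n) =
      (d : ℂ) ^ 2 / n := by
    rw [Fintype.card_fin]; field_simp; ring
  rcases dotProduct_self_eq_zero_or_of_dotProduct_eq (v := fun i => c i - a) hv hαβ
    (by rw [hγ]; exact div_ne_zero (pow_ne_zero 2 (mod_cast hd.ne')) hn0) hw hww with h | h
  · exact Or.inr ((phi_eq_dotProduct_sub a b).trans h)
  · left
    rw [← phi_eq_dotProduct_sub, hγ, Fintype.card_fin] at h
    field_simp at h ⊢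
    linear_combination h
end
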